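/- Let n ≥ 2, let H and H₀ be n×n real symmetric matrices with H₀ ≠ 0, and let t₀ be a real number. Suppose there is perfect state transfer at time t₀, i.e. |(exp(i t₀ H))₁₂| = 1, and suppose ‖H₀‖·e^{‖H₀‖} ≤ 1. Then 1 − |(exp(i(t₀H + H₀)))₁₂|² ≤ 2‖H₀‖e^{‖H₀‖} − ‖H₀‖²e^{2‖H₀‖} ≤ 2‖H₀‖ + ‖H₀‖² − ‖H₀‖³, where ‖·‖ denotes the operator (spectral) norm. -/

import Mathlib

/-!
Write `X = i t₀ H` and `Y = i H₀`; both are skew-Hermitian, so every `exp (s X)` and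
`exp (s (X + Y))` is unitary. The derivative of `s ↦ exp (-s X) exp (s (X + Y))` is
`exp (-s X) Y exp (s (X + Y))`, of norm `‖Y‖ = ‖H₀‖`, so by the mean value theorem
`‖exp (X + Y) - exp X‖ ≤ ‖H₀‖`. An entry of a matrix is bounded by its operator norm, hence
`|exp (X + Y)₁₂| ≥ 1 - ‖H₀‖ ≥ 1 - ‖H₀‖ e^‖H₀‖ ≥ 0`, which gives the first inequality. The second
one is scalar: `‖H₀‖ ≤ 1`, and `e^d ≤ 1 + d + d²/2 + 2d³/9` on `[0, 1]` suffices.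
-/

open Matrix
open scoped Matrix.Norms.L2Operator

theorem CStarRing.norm_exp_add_sub_exp_le {A : Type*} [CStarAlgebra A] {x y : A}
    (hx : x ∈ skewAdjoint A) (hy : y ∈ skewAdjoint A) :
    ‖NormedSpace.exp (x + y) - NormedSpace.exp x‖ ≤ ‖y‖ := by
  let +nondep : NormedAlgebra ℚ A := .restrictScalars ℚ ℂ A
  have unitary_exp_smul : ∀ (s : ℝ) {z : A}, z ∈ skewAdjoint A →
      NormedSpace.exp (s • z) ∈ unitary A := fun s z hz =>
    NormedSpace.exp_mem_unitary_of_mem_skewAdjoint (skewAdjoint.smul_mem s hz)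
  set F : ℝ → A := fun s => NormedSpace.exp (s • -x) * NormedSpace.exp (s • (x + y))
  have hF : ∀ s, HasDerivAt F
      (NormedSpace.exp (s • -x) * y * NormedSpace.exp (s • (x + y))) s := fun s =>
    ((hasDerivAt_exp_smul_const (-x) s).mul (hasDerivAt_exp_smul_const' (x + y) s)).congr_deriv
      (by noncomm_ring)
  have hF_norm : ∀ s, ‖NormedSpace.exp (s • -x) * y * NormedSpace.exp (s • (x + y))‖ = ‖y‖ :=
    fun s => by
      rw [CStarRing.norm_mul_mem_unitary _ (unitary_exp_smul s (add_mem hx hy)),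
        CStarRing.norm_mem_unitary_mul _ (unitary_exp_smul s (neg_mem hx))]
  have hF_sub : ‖F 1 - F 0‖ ≤ ‖y‖ :=
    norm_image_sub_le_of_norm_deriv_le_segment_01' (fun s _ => (hF s).hasDerivWithinAt)
      fun s _ => (hF_norm s).le
  have hexp : NormedSpace.exp (x + y) - NormedSpace.exp x = NormedSpace.exp x * (F 1 - F 0) := by
    simp only [F, one_smul, zero_smul, NormedSpace.exp_zero, mul_one, mul_sub, ← mul_assoc,
      ← NormedSpace.exp_add_of_commute (Commute.refl x).neg_right, add_neg_cancel, one_mul]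
  rwa [hexp, CStarRing.norm_mem_unitary_mul _ (NormedSpace.exp_mem_unitary_of_mem_skewAdjoint hx)]

section L2OpNorm

variable {m n : Type*} [Fintype m] [Fintype n] [DecidableEq n]

theorem Matrix.norm_apply_le_l2_opNorm {𝕜 : Type*} [RCLike 𝕜] (M : Matrix m n 𝕜) (i : m)
    (j : n) : ‖M i j‖ ≤ ‖M‖ := by
  have hcol : M i j = (EuclideanSpace.equiv m 𝕜).symm (M *ᵥ Pi.single j 1) i := by
    rw [mulVec_single_one]; rfl
  have hMe := M.l2_opNorm_mulVec (EuclideanSpace.single j (1 : 𝕜))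
  rw [PiLp.norm_single, norm_one, mul_one] at hMe
  rw [hcol]
  exact (PiLp.norm_apply_le _ i).trans hMe

theorem Matrix.norm_apply_sub_norm_apply_le_l2_opNorm_sub {𝕜 : Type*} [RCLike 𝕜]
    (U V : Matrix m n 𝕜) (i : m) (j : n) : ‖U i j‖ - ‖V i j‖ ≤ ‖U - V‖ :=
  (norm_sub_norm_le _ _).trans ((U - V).norm_apply_le_l2_opNorm i j)

theorem EuclideanSpace.norm_toLp_sq_eq_re_add_im {ι : Type*} [Fintype ι] (z : ι → ℂ) :
    ‖WithLp.toLp 2 z‖ ^ 2 =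
      ‖WithLp.toLp 2 (fun k => (z k).re)‖ ^ 2 + ‖WithLp.toLp 2 (fun k => (z k).im)‖ ^ 2 := by
  rw [EuclideanSpace.norm_sq_eq, EuclideanSpace.real_norm_sq_eq, EuclideanSpace.real_norm_sq_eq,
    ← Finset.sum_add_distrib]
  simp only [Complex.sq_norm, Complex.normSq_apply, ← sq]

theorem Matrix.l2_opNorm_map_ofReal_le (M : Matrix m n ℝ) :
    ‖M.map ((↑) : ℝ → ℂ)‖ ≤ ‖M‖ := by
  rw [l2_opNorm_def]
  refine ContinuousLinearMap.opNorm_le_bound _ (norm_nonneg M) fun x => ?_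
  set a : EuclideanSpace ℝ n := WithLp.toLp 2 fun k => (x k).re
  set b : EuclideanSpace ℝ n := WithLp.toLp 2 fun k => (x k).im
  have hx : ‖x‖ ^ 2 = ‖a‖ ^ 2 + ‖b‖ ^ 2 := EuclideanSpace.norm_toLp_sq_eq_re_add_im x.ofLp
  have hMx := EuclideanSpace.norm_toLp_sq_eq_re_add_im (M.map ((↑) : ℝ → ℂ) *ᵥ x)
  have hre : (fun k => ((M.map ((↑) : ℝ → ℂ) *ᵥ x) k).re) = M *ᵥ a := by
    ext k; simp [mulVec, dotProduct, Complex.re_sum, a]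
  have him : (fun k => ((M.map ((↑) : ℝ → ℂ) *ᵥ x) k).im) = M *ᵥ b := by
    ext k; simp [mulVec, dotProduct, Complex.im_sum, b]
  rw [hre, him] at hMx
  change ‖WithLp.toLp 2 (M.map ((↑) : ℝ → ℂ) *ᵥ x)‖ ≤ ‖M‖ * ‖x‖
  refine (pow_le_pow_iff_left₀ (norm_nonneg _) (by positivity) two_ne_zero).1 ?_
  rw [hMx, mul_pow, hx, mul_add, ← mul_pow, ← mul_pow]
  exact add_le_add (pow_le_pow_left₀ (norm_nonneg _) (M.l2_opNorm_mulVec a) 2)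
    (pow_le_pow_left₀ (norm_nonneg _) (M.l2_opNorm_mulVec b) 2)

end L2OpNorm

theorem Matrix.IsSymm.isHermitian_map_ofReal {n : Type*} {M : Matrix n n ℝ} (hM : M.IsSymm) :
    (M.map ((↑) : ℝ → ℂ)).IsHermitian := by
  ext i j
  simp [hM.apply]

theorem Real.two_mul_mul_exp_sub_sq_mul_exp_two_mul_le {d : ℝ} (hd : 0 ≤ d)
    (hsmall : d * Real.exp d ≤ 1) :
    2 * d * Real.exp d - d ^ 2 * Real.exp (2 * d) ≤ 2 * d + d ^ 2 - d ^ 3 := by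
  have hd1 : d ≤ 1 := (le_mul_of_one_le_right hd (Real.one_le_exp hd)).trans hsmall
  have hup : Real.exp d ≤ 1 + d + d ^ 2 / 2 + 2 / 9 * d ^ 3 := by
    have := Real.exp_bound' hd hd1 (n := 3) (by norm_num)
    norm_num [Finset.sum_range_succ, Nat.factorial] at this
    linarith
  set r := Real.exp d - 1 - d
  have hr0 : 0 ≤ r := by linarith [Real.add_one_le_exp d]
  -- the difference of the two sides is `d` times this quantity
  have key : 0 ≤ d ^ 2 + d ^ 3 - 2 * r + 2 * r * d + 2 * r * d ^ 2 + d * r ^ 2 := by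
    nlinarith [pow_nonneg hd 3, mul_nonneg hr0 hd, mul_nonneg hr0 (sq_nonneg d),
      mul_nonneg hd (sq_nonneg r)]
  have hE : Real.exp d = 1 + d + r := by ring
  rw [two_mul d, Real.exp_add, hE]
  nlinarith [mul_nonneg hd key]

/-- Theorem (edge-weight perturbation bound): if there is perfect state transfer at time
`t₀`, `H₀ ≠ 0` is a real symmetric perturbation with `‖H₀‖ e^{‖H₀‖} ≤ 1`, then
`1 - |(exp(i(t₀H + H₀)))₁₂|² ≤ 2‖H₀‖e^{‖H₀‖} - ‖H₀‖²e^{2‖H₀‖} ≤ 2‖H₀‖ + ‖H₀‖² - ‖H₀‖³`. -/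
theorem stmt5 {n : ℕ} (hn : 2 ≤ n) (H H₀ : Matrix (Fin n) (Fin n) ℝ)
    (hH : H.IsSymm) (hH₀ : H₀.IsSymm) (t₀ : ℝ)
    (hPST : norm
       ((NormedSpace.exp (Complex.I • (t₀ : ℂ) • H.map (fun x => (x : ℂ))))
         ⟨0, by omega⟩ ⟨1, by omega⟩) = 1)
    (hsmall : ‖H₀‖ * Real.exp ‖H₀‖ ≤ 1) :
    1 - norm
        ((NormedSpace.exp (Complex.I • (t₀ • H + H₀).map (fun x => (x : ℂ))))
          ⟨0, by omega⟩ ⟨1, by omega⟩) ^ 2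
      ≤ 2 * ‖H₀‖ * Real.exp ‖H₀‖ - ‖H₀‖ ^ 2 * Real.exp (2 * ‖H₀‖)
    ∧ 2 * ‖H₀‖ * Real.exp ‖H₀‖ - ‖H₀‖ ^ 2 * Real.exp (2 * ‖H₀‖)
      ≤ 2 * ‖H₀‖ + ‖H₀‖ ^ 2 - ‖H₀‖ ^ 3 := by
  have hX : Complex.I • (t₀ : ℂ) • H.map (fun x => (x : ℂ)) ∈ skewAdjoint _ :=
    (IsSelfAdjoint.smul (Complex.conj_ofReal t₀)
      hH.isHermitian_map_ofReal.isSelfAdjoint).I_smul_mem_skewAdjoint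
  have hY : Complex.I • H₀.map (fun x => (x : ℂ)) ∈ skewAdjoint _ :=
    hH₀.isHermitian_map_ofReal.isSelfAdjoint.I_smul_mem_skewAdjoint
  have hXY : Complex.I • (t₀ • H + H₀).map (fun x => (x : ℂ)) =
      Complex.I • (t₀ : ℂ) • H.map (fun x => (x : ℂ)) + Complex.I • H₀.map (fun x => (x : ℂ)) := by
    rw [← smul_add]; congr 1; ext; simp
  have hY_norm : ‖Complex.I • H₀.map (fun x => (x : ℂ))‖ ≤ ‖H₀‖ := by
    rw [norm_smul, Complex.norm_I, one_mul]
    exact H₀.l2_opNorm_map_ofReal_le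
  have hclose := (CStarRing.norm_exp_add_sub_exp_le hX hY).trans hY_norm
  rw [← hXY] at hclose
  set U := NormedSpace.exp (Complex.I • (t₀ : ℂ) • H.map (fun x => (x : ℂ)))
  set V := NormedSpace.exp (Complex.I • (t₀ • H + H₀).map (fun x => (x : ℂ)))
  set d := ‖H₀‖
  have hentry : 1 - d ≤ ‖V ⟨0, by omega⟩ ⟨1, by omega⟩‖ := by
    linarith [U.norm_apply_sub_norm_apply_le_l2_opNorm_sub V ⟨0, by omega⟩ ⟨1, by omega⟩,
      norm_sub_rev U V]
  refine ⟨?_, Real.two_mul_mul_exp_sub_sq_mul_exp_two_mul_le (norm_nonneg _) hsmall⟩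
  have hd : d ≤ d * Real.exp d :=
    le_mul_of_one_le_right (norm_nonneg _) (Real.one_le_exp (norm_nonneg _))
  rw [two_mul, Real.exp_add]
  nlinarith
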